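/- arXiv:2412.13603 — 4 statements merged into one kernel-verified Lean document; each statement's English description precedes it below -/
import Mathlib

section
/- Let φ be an even nonconstant polynomial with positive leading coefficient such that φ'' > 0 on ℝ (φ strictly convex), ρ = e^{-φ}, and A_n(x) = a_n ∫_ℝ D(x,y) P̃_n(y)² ρ(y) dy. Then A_n(x) > 0 for every x ∈ ℝ and every n ≥ 1. -/
open MeasureTheory Polynomial Filter Real Set

private lemma aux_tendsto (p : Polynomial ℝ) {c : ℝ} (hc : 0 < c) :
    Tendsto (fun x : ℝ => p.eval x * Real.exp (-(c * x))) atTop (nhds 0) := by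
  have h1 : Tendsto (fun x : ℝ => c * x) atTop atTop :=
    Tendsto.const_mul_atTop hc tendsto_id
  have h2 := (p.comp (Polynomial.C c⁻¹ * Polynomial.X)).tendsto_div_exp_atTop.comp h1
  have : (fun x : ℝ => p.eval x * Real.exp (-(c * x)))
      = (fun y : ℝ => (p.comp (Polynomial.C c⁻¹ * Polynomial.X)).eval y / Real.exp y) ∘
        (fun x : ℝ => c * x) := by
    funext x
    simp [Function.comp, eval_comp, Real.exp_neg, div_eq_mul_inv, inv_mul_cancel_left₀ hc.ne']
  rw [this]
  exact h2

private lemma aux_integrableOn (φ p : Polynomial ℝ) {A c : ℝ} (hc : 0 < c)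
    (hb : ∀ y : ℝ, A + c * |y| ≤ φ.eval y) :
    IntegrableOn (fun y : ℝ => p.eval y * Real.exp (-φ.eval y)) (Ioi 0) := by
  apply integrable_of_isBigO_exp_neg (half_pos hc) (a := 0)
  · exact ((p.continuous_aeval).mul ((φ.continuous_aeval).neg.rexp)).continuousOn
  · apply Asymptotics.IsLittleO.isBigO
    rw [Asymptotics.isLittleO_iff_tendsto (fun x h => absurd h (Real.exp_ne_zero _))]
    apply squeeze_zero_norm'
      (a := fun x : ℝ => Real.exp (-A) * |p.eval x * Real.exp (-(c / 2 * x))|)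
    · filter_upwards [eventually_ge_atTop (0 : ℝ)] with x hx
      have hbx := hb x
      rw [abs_of_nonneg hx] at hbx
      have key : Real.exp (-φ.eval x) / Real.exp (-(c / 2) * x)
          ≤ Real.exp (-A) * Real.exp (-(c / 2 * x)) := by
        rw [div_eq_mul_inv, ← Real.exp_neg, ← Real.exp_add, ← Real.exp_add]
        apply Real.exp_le_exp.2
        linarith
      have hnn : 0 ≤ Real.exp (-φ.eval x) / Real.exp (-(c / 2) * x) :=
        div_nonneg (Real.exp_pos _).le (Real.exp_pos _).le
      calc ‖p.eval x * Real.exp (-φ.eval x) / Real.exp (-(c / 2) * x)‖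
          = |p.eval x| * (Real.exp (-φ.eval x) / Real.exp (-(c / 2) * x)) := by
            rw [Real.norm_eq_abs, mul_div_assoc, abs_mul, abs_of_nonneg hnn]
        _ ≤ |p.eval x| * (Real.exp (-A) * Real.exp (-(c / 2 * x))) :=
            mul_le_mul_of_nonneg_left key (abs_nonneg _)
        _ = Real.exp (-A) * |p.eval x * Real.exp (-(c / 2 * x))| := by
            rw [abs_mul, abs_of_pos (Real.exp_pos _)]; ring
    · have := ((aux_tendsto p (by linarith : (0:ℝ) < c / 2)).abs).const_mul (Real.exp (-A))
      simpa [mul_comm] using this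

private lemma aux_integrable (φ p : Polynomial ℝ) {A c : ℝ} (hc : 0 < c)
    (hb : ∀ y : ℝ, A + c * |y| ≤ φ.eval y) :
    Integrable (fun y : ℝ => p.eval y * Real.exp (-φ.eval y)) := by
  rw [← integrableOn_univ, ← Set.Iio_union_Ici (a := (0:ℝ)), integrableOn_union,
    integrableOn_Ici_iff_integrableOn_Ioi]
  refine ⟨?_, aux_integrableOn φ p hc hb⟩
  rw [← (Measure.measurePreserving_neg (volume : Measure ℝ)).integrableOn_comp_preimage
      (Homeomorph.neg ℝ).measurableEmbedding]
  simp only [Function.comp_def, neg_preimage, neg_Iio, neg_neg, neg_zero]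
  have hfun : (fun y : ℝ => p.eval (-y) * Real.exp (-φ.eval (-y)))
      = fun y : ℝ => (p.comp (-Polynomial.X)).eval y *
        Real.exp (-(φ.comp (-Polynomial.X)).eval y) := by
    funext y; simp [eval_comp]
  rw [hfun]
  apply aux_integrableOn (φ.comp (-Polynomial.X)) (p.comp (-Polynomial.X)) hc
  intro y
  have := hb (-y)
  simpa [eval_comp, abs_neg] using this

private lemma aux_orth (w : ℝ → ℝ)
    (hInt : ∀ p : Polynomial ℝ, Integrable fun y : ℝ => p.eval y * w y)
    (P : ℕ → Polynomial ℝ) (hPdeg : ∀ n, (P n).natDegree = n)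
    (hPlead : ∀ n, 0 < (P n).leadingCoeff)
    (hPorth : ∀ i j, (∫ x : ℝ, (P i).eval x * (P j).eval x * w x) = if i = j then (1:ℝ) else 0) :
    ∀ (n : ℕ) (q : Polynomial ℝ), q.degree < (n : ℕ) →
      (∫ x : ℝ, (q * P n).eval x * w x) = 0 := by
  have hJorth : ∀ i j, (∫ x : ℝ, (P i * P j).eval x * w x) = if i = j then (1:ℝ) else 0 := by
    intro i j; simp only [eval_mul]; exact hPorth i j
  have hJadd : ∀ p q : Polynomial ℝ, (∫ x : ℝ, (p + q).eval x * w x)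
      = (∫ x : ℝ, p.eval x * w x) + ∫ x : ℝ, q.eval x * w x := by
    intro p q; simp only [eval_add, add_mul]; exact integral_add (hInt p) (hInt q)
  have hJmul : ∀ (c : ℝ) (p : Polynomial ℝ), (∫ x : ℝ, (Polynomial.C c * p).eval x * w x)
      = c * ∫ x : ℝ, p.eval x * w x := by
    intro c p; simp only [eval_mul, eval_C, mul_assoc]; exact integral_const_mul c _
  suffices H : ∀ d : ℕ, ∀ q : Polynomial ℝ, q.natDegree ≤ d → ∀ n : ℕ, q.degree < (n : ℕ) →
      (∫ x : ℝ, (q * P n).eval x * w x) = 0 by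
    intro n q h; exact H q.natDegree q le_rfl n h
  intro d
  induction d using Nat.strong_induction_on with
  | _ d IH =>
    intro q hqd n hqn
    rcases eq_or_ne q 0 with rfl | hq0
    · simp
    · set k := q.natDegree with hk
      have hkn : k < n := (natDegree_lt_iff_degree_lt hq0).2 hqn
      have hPk0 : (P k).leadingCoeff ≠ 0 := ne_of_gt (hPlead k)
      have hPkne : P k ≠ 0 := leadingCoeff_ne_zero.1 hPk0
      set cc := q.leadingCoeff / (P k).leadingCoeff with hcc
      have hcc0 : cc ≠ 0 := div_ne_zero (leadingCoeff_ne_zero.2 hq0) hPk0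
      set r := q - Polynomial.C cc * P k with hr
      have hdegq : q.degree = (k : ℕ) := degree_eq_natDegree hq0
      have hdegPk : (P k).degree = (k : ℕ) := by
        rw [degree_eq_natDegree hPkne, hPdeg k]
      have hdeg_eq : q.degree = (Polynomial.C cc * P k).degree := by
        rw [degree_C_mul hcc0, hdegq, hdegPk]
      have hlc : q.leadingCoeff = (Polynomial.C cc * P k).leadingCoeff := by
        rw [leadingCoeff_mul, leadingCoeff_C, hcc, div_mul_cancel₀ _ hPk0]
      have hrdeg : r.degree < q.degree := degree_sub_lt hdeg_eq hq0 hlc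
      have hqsplit : q = Polynomial.C cc * P k + r := by rw [hr]; ring
      have hstep : q * P n = Polynomial.C cc * (P k * P n) + r * P n := by
        rw [hqsplit]; ring
      rw [hstep, hJadd, hJmul, hJorth k n, if_neg (Nat.ne_of_lt hkn), mul_zero, zero_add]
      rcases eq_or_ne r 0 with hr0 | hr0
      · simp [hr0]
      · have hrk : r.natDegree < k := natDegree_lt_natDegree hr0 hrdeg
        exact IH r.natDegree (lt_of_lt_of_le hrk hqd) r le_rfl n (hrdeg.trans hqn)

private lemma aux_an (w : ℝ → ℝ)
    (hInt : ∀ p : Polynomial ℝ, Integrable fun y : ℝ => p.eval y * w y)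
    (P : ℕ → Polynomial ℝ) (hPdeg : ∀ n, (P n).natDegree = n)
    (hPlead : ∀ n, 0 < (P n).leadingCoeff)
    (hPorth : ∀ i j, (∫ x : ℝ, (P i).eval x * (P j).eval x * w x) = if i = j then (1:ℝ) else 0)
    (n : ℕ) (hn : 1 ≤ n) :
    (∫ x : ℝ, x * (P (n-1)).eval x * (P n).eval x * w x)
      = (P (n-1)).leadingCoeff / (P n).leadingCoeff := by
  have hJadd : ∀ p q : Polynomial ℝ, (∫ x : ℝ, (p + q).eval x * w x)
      = (∫ x : ℝ, p.eval x * w x) + ∫ x : ℝ, q.eval x * w x := by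
    intro p q; simp only [eval_add, add_mul]; exact integral_add (hInt p) (hInt q)
  have hJmul : ∀ (c : ℝ) (p : Polynomial ℝ), (∫ x : ℝ, (Polynomial.C c * p).eval x * w x)
      = c * ∫ x : ℝ, p.eval x * w x := by
    intro c p; simp only [eval_mul, eval_C, mul_assoc]; exact integral_const_mul c _
  set g := Polynomial.X * P (n-1) with hg
  have hPm0 : P (n-1) ≠ 0 := leadingCoeff_ne_zero.1 (ne_of_gt (hPlead (n-1)))
  have hPn0 : P n ≠ 0 := leadingCoeff_ne_zero.1 (ne_of_gt (hPlead n))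
  have hg0 : g ≠ 0 := mul_ne_zero Polynomial.X_ne_zero hPm0
  have hgdeg : g.natDegree = n := by
    rw [hg, natDegree_mul Polynomial.X_ne_zero hPm0, natDegree_X, hPdeg]
    omega
  have hglc : g.leadingCoeff = (P (n-1)).leadingCoeff := by
    rw [hg, leadingCoeff_mul, leadingCoeff_X, one_mul]
  set cc := (P (n-1)).leadingCoeff / (P n).leadingCoeff with hcc
  have hcc0 : cc ≠ 0 := div_ne_zero (ne_of_gt (hPlead (n-1))) (ne_of_gt (hPlead n))
  set r := g - Polynomial.C cc * P n with hr
  have hdeg_eq : g.degree = (Polynomial.C cc * P n).degree := by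
    rw [degree_C_mul hcc0, degree_eq_natDegree hg0, degree_eq_natDegree hPn0, hgdeg, hPdeg]
  have hlc : g.leadingCoeff = (Polynomial.C cc * P n).leadingCoeff := by
    rw [hglc, leadingCoeff_mul, leadingCoeff_C, hcc, div_mul_cancel₀ _ (ne_of_gt (hPlead n))]
  have hrdeg : r.degree < g.degree := degree_sub_lt hdeg_eq hg0 hlc
  have hrn : r.degree < (n : ℕ) := by
    rw [degree_eq_natDegree hg0, hgdeg] at hrdeg
    exact hrdeg
  have hIeq : (∫ x : ℝ, x * (P (n-1)).eval x * (P n).eval x * w x)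
      = ∫ x : ℝ, (g * P n).eval x * w x := by
    congr 1; funext x; simp [hg, eval_mul, mul_assoc]
  have hstep : g * P n = Polynomial.C cc * (P n * P n) + r * P n := by
    rw [hr]; ring
  rw [hIeq, hstep, hJadd, hJmul]
  have h1 : (∫ x : ℝ, (P n * P n).eval x * w x) = 1 := by
    simp only [eval_mul]
    rw [hPorth n n, if_pos rfl]
  rw [h1, aux_orth w hInt P hPdeg hPlead hPorth n r hrn, mul_one, add_zero]

theorem stmt6 (m : ℕ) (hm : 1 ≤ m) (φ : Polynomial ℝ)
    (hφdeg : φ.natDegree = 2 * m) (hφlead : 0 < φ.leadingCoeff)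
    (hφeven : ∀ x : ℝ, φ.eval (-x) = φ.eval x)
    (hφconv : ∀ x : ℝ, 0 < (Polynomial.derivative (Polynomial.derivative φ)).eval x)
    (ρ : ℝ → ℝ) (hρ : ∀ x : ℝ, ρ x = Real.exp (-φ.eval x))
    (P : ℕ → Polynomial ℝ)
    (hPdeg : ∀ n, (P n).natDegree = n)
    (hPlead : ∀ n, 0 < (P n).leadingCoeff)
    (hPorth : ∀ i j, (∫ x : ℝ, (P i).eval x * (P j).eval x * ρ x)
        = if i = j then (1 : ℝ) else 0)
    (a : ℕ → ℝ) (ha0 : a 0 = Real.sqrt (∫ x : ℝ, ρ x))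
    (haS : ∀ n, 1 ≤ n → a n = ∫ x : ℝ, x * (P (n - 1)).eval x * (P n).eval x * ρ x)
    (D : ℝ → ℝ → ℝ)
    (hD : ∀ x y : ℝ, D x y * (x - y)
        = (Polynomial.derivative φ).eval x - (Polynomial.derivative φ).eval y)
    (A : ℕ → ℝ → ℝ)
    (hA : ∀ n, ∀ x : ℝ, A n x = a n * ∫ y : ℝ, D x y * (P n).eval y ^ 2 * ρ y) :
    ∀ n, 1 ≤ n → ∀ x : ℝ, 0 < A n x := by
  -- strict monotonicity of φ'
  have SM : StrictMono fun y : ℝ => (Polynomial.derivative φ).eval y := by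
    apply strictMono_of_deriv_pos
    intro x
    rw [Polynomial.deriv]
    exact hφconv x
  -- φ' is odd
  have hcomp : φ.comp (-Polynomial.X) = φ :=
    Polynomial.funext (fun x => by simp [eval_comp, hφeven x])
  have hodd : ∀ y : ℝ, (Polynomial.derivative φ).eval (-y)
      = -(Polynomial.derivative φ).eval y := by
    intro y
    have h1 := congrArg Polynomial.derivative hcomp
    rw [derivative_comp] at h1
    have h2 := congrArg (Polynomial.eval y) h1
    simp [eval_comp] at h2
    linarith
  have hd0 : (Polynomial.derivative φ).eval 0 = 0 := by
    have := hodd 0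
    simp at this
    linarith
  set c := (Polynomial.derivative φ).eval 1 with hcdef
  have hc : 0 < c := by
    have h := SM (zero_lt_one (α := ℝ))
    simp only at h
    rw [hd0] at h
    exact h
  -- monotonicity bound on [1, ∞)
  have hmono : ∀ y : ℝ, 1 ≤ y → φ.eval 1 - c * 1 ≤ φ.eval y - c * y := by
    have H : StrictMonoOn (fun y : ℝ => φ.eval y - c * y) (Ici 1) := by
      apply strictMonoOn_of_deriv_pos (convex_Ici 1)
      · exact ((φ.continuous_aeval).sub (continuous_const.mul continuous_id)).continuousOn
      · intro x hx
        rw [interior_Ici] at hx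
        have hder : HasDerivAt (fun y : ℝ => φ.eval y - c * y)
            ((Polynomial.derivative φ).eval x - c * 1) x :=
          (φ.hasDerivAt x).sub ((hasDerivAt_id x).const_mul c)
        rw [hder.deriv]
        have := SM (show (1:ℝ) < x from hx)
        simp only [mul_one]
        linarith
    intro y hy
    rcases eq_or_lt_of_le hy with rfl | hy'
    · exact le_rfl
    · exact le_of_lt (H self_mem_Ici (show y ∈ Ici 1 from hy) hy')
  -- minimum on [-1, 1]
  obtain ⟨z, hz, hminz⟩ := isCompact_Icc.exists_isMinOn
    (nonempty_Icc.2 (by norm_num : (-1:ℝ) ≤ 1)) (φ.continuous_aeval.continuousOn)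
  set B := φ.eval z with hB
  have hmin : ∀ y ∈ Icc (-1:ℝ) 1, B ≤ φ.eval y := fun y hy => hminz hy
  -- global linear lower bound
  set A₀ := min B (φ.eval 1) - c with hA₀
  have hbound : ∀ y : ℝ, A₀ + c * |y| ≤ φ.eval y := by
    intro y
    rcases le_or_gt (|y|) 1 with h1 | h1
    · have h2 : B ≤ φ.eval y := hmin y (abs_le.1 h1)
      have h3 : c * |y| ≤ c * 1 := mul_le_mul_of_nonneg_left h1 hc.le
      have := min_le_left B (φ.eval 1)
      linarith
    · rcases le_or_gt 1 y with hy | hy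
      · have h2 := hmono y hy
        have h3 : |y| = y := abs_of_nonneg (by linarith)
        have := min_le_right B (φ.eval 1)
        rw [h3]
        linarith
      · have hy' : 1 ≤ -y := by
          rcases abs_cases y with ⟨h, _⟩ | ⟨h, _⟩
          · rw [h] at h1; linarith
          · rw [h] at h1; linarith
        have h2 := hmono (-y) hy'
        rw [hφeven y] at h2
        have h3 : |y| = -y := by
          rcases abs_cases y with ⟨h, h'⟩ | ⟨h, _⟩
          · linarith
          · exact h
        have := min_le_right B (φ.eval 1)
        rw [h3]
        linarith
  -- integrability of polynomial × weight
  have hIntw : ∀ p : Polynomial ℝ, Integrable fun y : ℝ => p.eval y * ρ y := by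
    intro p
    have heq : (fun y : ℝ => p.eval y * ρ y)
        = fun y : ℝ => p.eval y * Real.exp (-φ.eval y) := funext fun y => by rw [hρ]
    rw [heq]
    exact aux_integrable φ p hc hbound
  -- positivity of a n
  have han : ∀ n : ℕ, 1 ≤ n → 0 < a n := by
    intro n hn
    rw [haS n hn, aux_an ρ hIntw P hPdeg hPlead hPorth n hn]
    exact div_pos (hPlead (n-1)) (hPlead n)
  intro n hn x
  -- divided difference polynomial
  obtain ⟨q, hq⟩ := Polynomial.X_sub_C_dvd_sub_C_eval
    (a := x) (p := Polynomial.derivative φ)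
  have hqeval : ∀ y : ℝ, (Polynomial.derivative φ).eval y
      - (Polynomial.derivative φ).eval x = (y - x) * q.eval y := by
    intro y
    have := congrArg (Polynomial.eval y) hq
    simpa using this
  have hDq : ∀ y : ℝ, y ≠ x → D x y = q.eval y := by
    intro y hyx
    have h1 := hD x y
    have h2 := hqeval y
    have h3 : D x y * (x - y) = q.eval y * (x - y) := by
      rw [h1]
      have : (Polynomial.derivative φ).eval x - (Polynomial.derivative φ).eval y
          = -((y - x) * q.eval y) := by linarith
      rw [this]; ring
    exact mul_right_cancel₀ (sub_ne_zero.2 (Ne.symm hyx)) h3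
  have hqpos : ∀ y : ℝ, 0 < q.eval y := by
    intro y
    rcases eq_or_ne y x with rfl | hyx
    · -- q(x) = φ''(x) > 0
      have h1 := congrArg Polynomial.derivative hq
      rw [derivative_sub, derivative_C, sub_zero, derivative_mul, derivative_sub,
        derivative_X, derivative_C, sub_zero, one_mul] at h1
      have h2 := congrArg (Polynomial.eval y) h1
      simp [eval_add, eval_mul] at h2
      rw [← h2]
      exact hφconv y
    · have hy : q.eval y = ((Polynomial.derivative φ).eval y
          - (Polynomial.derivative φ).eval x) / (y - x) := by
        rw [hqeval y, mul_comm, mul_div_assoc, div_self (sub_ne_zero.2 hyx), mul_one]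
      rw [hy]
      rcases lt_or_gt_of_ne hyx with h | h
      · apply div_pos_of_neg_of_neg
        · have := SM h; linarith
        · linarith
      · apply div_pos
        · have := SM h; linarith
        · linarith
  -- rewrite integral a.e.
  have hae : (fun y : ℝ => D x y * (P n).eval y ^ 2 * ρ y)
      =ᵐ[volume] fun y : ℝ => (q * (P n)^2).eval y * ρ y := by
    rw [Filter.EventuallyEq, ae_iff]
    have hsub0 : {y : ℝ | ¬ D x y * (P n).eval y ^ 2 * ρ y = (q * (P n)^2).eval y * ρ y}
        ⊆ {x} := by
      intro y hy
      simp only [Set.mem_setOf_eq] at hy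
      simp only [Set.mem_singleton_iff]
      by_contra hyx
      apply hy
      rw [hDq y hyx]
      simp [eval_mul, eval_pow]
    exact measure_mono_null hsub0 (measure_singleton x)
  have hnn : ∀ y : ℝ, 0 ≤ (q * (P n)^2).eval y * ρ y := by
    intro y
    rw [hρ]
    simp only [eval_mul, eval_pow]
    have := hqpos y
    positivity
  have hPn0 : P n ≠ 0 := leadingCoeff_ne_zero.1 (ne_of_gt (hPlead n))
  have hpos : 0 < ∫ y : ℝ, (q * (P n)^2).eval y * ρ y := by
    rw [integral_pos_iff_support_of_nonneg (fun y => hnn y) (hIntw _)]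
    have hfin : {y : ℝ | (P n).IsRoot y}.Finite := Polynomial.finite_setOf_isRoot hPn0
    have hsub : {y : ℝ | (P n).IsRoot y}ᶜ
        ⊆ Function.support (fun y : ℝ => (q * (P n)^2).eval y * ρ y) := by
      intro y hy
      simp only [Set.mem_compl_iff, Set.mem_setOf_eq, Polynomial.IsRoot] at hy
      simp only [Function.mem_support]
      apply ne_of_gt
      show 0 < (q * (P n)^2).eval y * ρ y
      rw [hρ]
      simp only [eval_mul, eval_pow]
      have h1 := hqpos y
      have h2 : 0 < (P n).eval y ^ 2 := by positivity
      positivity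
    have hc1 : volume ({y : ℝ | (P n).IsRoot y}ᶜ) = ⊤ := by
      have h1 : volume {y : ℝ | (P n).IsRoot y} = 0 := hfin.measure_zero _
      have h2 := measure_union_le (μ := volume)
        {y : ℝ | (P n).IsRoot y} ({y : ℝ | (P n).IsRoot y}ᶜ)
      rw [Set.union_compl_self, Real.volume_univ, h1, zero_add] at h2
      exact top_le_iff.1 h2
    refine lt_of_lt_of_le ?_ (measure_mono hsub)
    rw [hc1]
    simp
  rw [hA n x, integral_congr_ae hae]
  exact mul_pos (han n hn) hpos
end

section
/- Let φ(x) = (x−1)²(x+1)² = x⁴ − 2x² + 1 (the double well potential), ρ = e^{-φ}, and for n ≥ 1 let A_n(x) = a_n ∫_ℝ D(x,y) P̃_n(y)² ρ(y) dy and B_n(x) = a_n ∫_ℝ D(x,y) P̃_n(y) P̃_{n-1}(y) ρ(y) dy. Then A_n(x) = 4 a_n (x² + a_n² + a_{n+1}² − 1) and B_n(x) = 4 a_n² x for all x ∈ ℝ. -/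
open MeasureTheory Polynomial

private lemma intlin (c : ℝ) (f g : ℝ → ℝ) (hf : Integrable f) (hg : Integrable g) :
    (∫ y, (c * f y + g y)) = c * (∫ y, f y) + ∫ y, g y := by
  have h1 : Integrable (fun y => c * f y) := hf.const_mul c
  rw [integral_add h1 hg, integral_const_mul _ _]

private lemma intlin5 (c1 c2 c3 c4 c5 : ℝ) (f1 f2 f3 f4 f5 : ℝ → ℝ)
    (h1 : Integrable f1) (h2 : Integrable f2) (h3 : Integrable f3) (h4 : Integrable f4)
    (h5 : Integrable f5) :
    (∫ y, (c1 * f1 y + (c2 * f2 y + (c3 * f3 y + (c4 * f4 y + c5 * f5 y)))))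
      = c1 * (∫ y, f1 y) + (c2 * (∫ y, f2 y) + (c3 * (∫ y, f3 y)
          + (c4 * (∫ y, f4 y) + c5 * (∫ y, f5 y)))) := by
  have i5 : Integrable (fun y => c5 * f5 y) := h5.const_mul c5
  have i45 : Integrable (fun y => c4 * f4 y + c5 * f5 y) := (h4.const_mul c4).add i5
  have i345 : Integrable (fun y => c3 * f3 y + (c4 * f4 y + c5 * f5 y)) :=
    (h3.const_mul c3).add i45
  have i2345 : Integrable (fun y => c2 * f2 y + (c3 * f3 y + (c4 * f4 y + c5 * f5 y))) :=
    (h2.const_mul c2).add i345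
  rw [intlin c1 f1 _ h1 i2345, intlin c2 f2 _ h2 i345, intlin c3 f3 _ h3 i45,
    intlin c4 f4 _ h4 i5, integral_const_mul _ _]

private lemma intlin6 (c1 c2 c3 c4 c5 c6 : ℝ) (f1 f2 f3 f4 f5 f6 : ℝ → ℝ)
    (h1 : Integrable f1) (h2 : Integrable f2) (h3 : Integrable f3) (h4 : Integrable f4)
    (h5 : Integrable f5) (h6 : Integrable f6) :
    (∫ y, (c1 * f1 y + (c2 * f2 y + (c3 * f3 y + (c4 * f4 y + (c5 * f5 y + c6 * f6 y))))))
      = c1 * (∫ y, f1 y) + (c2 * (∫ y, f2 y) + (c3 * (∫ y, f3 y)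
          + (c4 * (∫ y, f4 y) + (c5 * (∫ y, f5 y) + c6 * (∫ y, f6 y))))) := by
  have i6 : Integrable (fun y => c6 * f6 y) := h6.const_mul c6
  have i56 : Integrable (fun y => c5 * f5 y + c6 * f6 y) := (h5.const_mul c5).add i6
  have i456 : Integrable (fun y => c4 * f4 y + (c5 * f5 y + c6 * f6 y)) :=
    (h4.const_mul c4).add i56
  have i3456 : Integrable (fun y => c3 * f3 y + (c4 * f4 y + (c5 * f5 y + c6 * f6 y))) :=
    (h3.const_mul c3).add i456
  have i23456 : Integrable
      (fun y => c2 * f2 y + (c3 * f3 y + (c4 * f4 y + (c5 * f5 y + c6 * f6 y)))) :=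
    (h2.const_mul c2).add i3456
  rw [intlin c1 f1 _ h1 i23456, intlin c2 f2 _ h2 i3456, intlin c3 f3 _ h3 i456,
    intlin c4 f4 _ h4 i56, intlin c5 f5 _ h5 i6, integral_const_mul _ _]

private lemma intlin7 (c1 c2 c3 c4 c5 c6 c7 : ℝ) (f1 f2 f3 f4 f5 f6 f7 : ℝ → ℝ)
    (h1 : Integrable f1) (h2 : Integrable f2) (h3 : Integrable f3) (h4 : Integrable f4)
    (h5 : Integrable f5) (h6 : Integrable f6) (h7 : Integrable f7) :
    (∫ y, (c1 * f1 y + (c2 * f2 y + (c3 * f3 y + (c4 * f4 y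
        + (c5 * f5 y + (c6 * f6 y + c7 * f7 y)))))))
      = c1 * (∫ y, f1 y) + (c2 * (∫ y, f2 y) + (c3 * (∫ y, f3 y)
          + (c4 * (∫ y, f4 y) + (c5 * (∫ y, f5 y)
          + (c6 * (∫ y, f6 y) + c7 * (∫ y, f7 y)))))) := by
  have i7 : Integrable (fun y => c7 * f7 y) := h7.const_mul c7
  have i67 : Integrable (fun y => c6 * f6 y + c7 * f7 y) := (h6.const_mul c6).add i7
  have i567 : Integrable (fun y => c5 * f5 y + (c6 * f6 y + c7 * f7 y)) :=
    (h5.const_mul c5).add i67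
  have i4567 : Integrable (fun y => c4 * f4 y + (c5 * f5 y + (c6 * f6 y + c7 * f7 y))) :=
    (h4.const_mul c4).add i567
  have i34567 : Integrable
      (fun y => c3 * f3 y + (c4 * f4 y + (c5 * f5 y + (c6 * f6 y + c7 * f7 y)))) :=
    (h3.const_mul c3).add i4567
  have i234567 : Integrable
      (fun y => c2 * f2 y + (c3 * f3 y + (c4 * f4 y + (c5 * f5 y + (c6 * f6 y + c7 * f7 y))))) :=
    (h2.const_mul c2).add i34567
  rw [intlin c1 f1 _ h1 i234567, intlin c2 f2 _ h2 i34567, intlin c3 f3 _ h3 i4567,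
    intlin c4 f4 _ h4 i567, intlin c5 f5 _ h5 i67, intlin c6 f6 _ h6 i7, integral_const_mul _ _]

private lemma oddzero (f : ℝ → ℝ) (hf : ∀ y, f (-y) = - f y) : (∫ y, f y) = 0 := by
  have h := MeasureTheory.integral_neg_eq_self f (volume : Measure ℝ)
  simp only [hf, integral_neg] at h
  linarith

theorem stmt7
    (φ : ℝ → ℝ) (hφ : ∀ x : ℝ, φ x = (x - 1) ^ 2 * (x + 1) ^ 2)
    (ρ : ℝ → ℝ) (hρ : ∀ x : ℝ, ρ x = Real.exp (-φ x))
    (P : ℕ → Polynomial ℝ)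
    (hPdeg : ∀ n, (P n).natDegree = n)
    (hPlead : ∀ n, 0 < (P n).leadingCoeff)
    (hPorth : ∀ i j, (∫ x : ℝ, (P i).eval x * (P j).eval x * ρ x)
        = if i = j then (1 : ℝ) else 0)
    (a : ℕ → ℝ) (ha0 : a 0 = Real.sqrt (∫ x : ℝ, ρ x))
    (haS : ∀ n, 1 ≤ n → a n = ∫ x : ℝ, x * (P (n - 1)).eval x * (P n).eval x * ρ x)
    (hrec : ∀ n, 1 ≤ n → ∀ x : ℝ,
      x * (P n).eval x = a (n + 1) * (P (n + 1)).eval x + a n * (P (n - 1)).eval x)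
    (D : ℝ → ℝ → ℝ)
    (hD : ∀ x y : ℝ, D x y * (x - y) = (4 * x ^ 3 - 4 * x) - (4 * y ^ 3 - 4 * y))
    (A B : ℕ → ℝ → ℝ)
    (hA : ∀ n, ∀ x : ℝ, A n x = a n * ∫ y : ℝ, D x y * (P n).eval y ^ 2 * ρ y)
    (hB : ∀ n, ∀ x : ℝ,
      B n x = a n * ∫ y : ℝ, D x y * (P n).eval y * (P (n - 1)).eval y * ρ y) :
    ∀ n, 1 ≤ n → ∀ x : ℝ,
      A n x = 4 * a n * (x ^ 2 + a n ^ 2 + a (n + 1) ^ 2 - 1) ∧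
      B n x = 4 * a n ^ 2 * x := by
  -- basic facts about ρ
  have hρ0 : ∀ y : ℝ, 0 ≤ ρ y := fun y => by rw [hρ y]; positivity
  have hρcont : Continuous ρ := by
    have h : ρ = fun x => Real.exp (-((x - 1) ^ 2 * (x + 1) ^ 2)) :=
      funext fun x => by rw [hρ x, hφ x]
    rw [h]; fun_prop
  have hρeven : ∀ y : ℝ, ρ (-y) = ρ y := by
    intro y
    rw [hρ (-y), hρ y, hφ (-y), hφ y]
    congr 1
    ring
  have hGcont : ∀ i j : ℕ, Continuous (fun y : ℝ => (P i).eval y * (P j).eval y * ρ y) :=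
    fun i j => ((P i).continuous.mul (P j).continuous).mul hρcont
  -- integrability
  have hIntDiag : ∀ i, Integrable (fun y : ℝ => (P i).eval y * (P i).eval y * ρ y) := by
    intro i
    by_contra h
    have h0 := hPorth i i
    rw [integral_undef h, if_pos rfl] at h0
    norm_num at h0
  have hInt : ∀ i j, Integrable (fun y : ℝ => (P i).eval y * (P j).eval y * ρ y) := by
    intro i j
    refine Integrable.mono ((hIntDiag i).add (hIntDiag j))
      (hGcont i j).aestronglyMeasurable (ae_of_all _ fun y => ?_)
    simp only [Pi.add_apply, Real.norm_eq_abs]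
    have hab : |(P i).eval y * (P j).eval y|
        ≤ (P i).eval y * (P i).eval y + (P j).eval y * (P j).eval y := by
      rcases abs_cases ((P i).eval y * (P j).eval y) with ⟨h, _⟩ | ⟨h, _⟩ <;>
        nlinarith [sq_nonneg ((P i).eval y - (P j).eval y),
          sq_nonneg ((P i).eval y + (P j).eval y)]
    calc |(P i).eval y * (P j).eval y * ρ y|
        = |(P i).eval y * (P j).eval y| * ρ y := by rw [abs_mul, abs_of_nonneg (hρ0 y)]
      _ ≤ ((P i).eval y * (P i).eval y + (P j).eval y * (P j).eval y) * ρ y :=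
          mul_le_mul_of_nonneg_right hab (hρ0 y)
      _ = (P i).eval y * (P i).eval y * ρ y + (P j).eval y * (P j).eval y * ρ y := by ring
      _ ≤ |(P i).eval y * (P i).eval y * ρ y + (P j).eval y * (P j).eval y * ρ y| :=
          le_abs_self _
  -- orthogonality values
  have hd : ∀ i, (∫ y : ℝ, (P i).eval y * (P i).eval y * ρ y) = 1 := fun i => by
    rw [hPorth i i, if_pos rfl]
  have ho : ∀ i j, i ≠ j → (∫ y : ℝ, (P i).eval y * (P j).eval y * ρ y) = 0 := fun i j h => by
    rw [hPorth i j, if_neg h]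
  -- odd integrals
  have hyρ0 : (∫ y : ℝ, y * ρ y) = 0 := oddzero _ (fun y => by rw [hρeven y]; ring)
  -- structure of P 0 and P 1
  have hP0eval : ∀ y : ℝ, (P 0).eval y = (P 0).coeff 0 := by
    intro y
    conv_lhs => rw [eq_C_of_natDegree_eq_zero (hPdeg 0)]
    simp
  have hP1eval : ∀ y : ℝ, (P 1).eval y = (P 1).coeff 1 * y + (P 1).coeff 0 := by
    intro y
    conv_lhs => rw [eq_X_add_C_of_natDegree_le_one (le_of_eq (hPdeg 1))]
    simp
  have hc0 : (P 0).coeff 0 ≠ 0 := by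
    have h := hPlead 0
    rw [Polynomial.leadingCoeff, hPdeg 0] at h
    exact ne_of_gt h
  have hα : (P 1).coeff 1 ≠ 0 := by
    have h := hPlead 1
    rw [Polynomial.leadingCoeff, hPdeg 1] at h
    exact ne_of_gt h
  have hIntyρ : Integrable (fun y : ℝ => y * ρ y) := by
    have heq : (fun y : ℝ => y * ρ y)
        = (fun y : ℝ => (1 / ((P 1).coeff 1 * (P 0).coeff 0))
              * ((P 1).eval y * (P 0).eval y * ρ y)
            + (-(P 1).coeff 0 / ((P 1).coeff 1 * (P 0).coeff 0 ^ 2))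
              * ((P 0).eval y * (P 0).eval y * ρ y)) := by
      funext y
      rw [hP0eval y, hP1eval y]
      field_simp
      ring
    rw [heq]
    exact ((hInt 1 0).const_mul _).add ((hInt 0 0).const_mul _)
  -- D off the diagonal
  have hne : ∀ x : ℝ, ∀ᵐ y : ℝ, y ≠ x := by
    intro x
    rw [ae_iff]
    simp only [not_not, Set.setOf_eq_eq_singleton]
    exact measure_singleton x
  have hDE : ∀ x y : ℝ, y ≠ x → D x y = 4 * (x ^ 2 + x * y + y ^ 2 - 1) := by
    intro x y hy
    have hxy : x - y ≠ 0 := sub_ne_zero.mpr (Ne.symm hy)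
    have h2 : (4 * (x ^ 2 + x * y + y ^ 2 - 1)) * (x - y)
        = (4 * x ^ 3 - 4 * x) - (4 * y ^ 3 - 4 * y) := by ring
    exact mul_right_cancel₀ hxy ((hD x y).trans h2.symm)
  -- main proof
  intro n hn x
  have h1y : ∀ y : ℝ, y * (P n).eval y
      = a (n + 1) * (P (n + 1)).eval y + a n * (P (n - 1)).eval y := hrec n hn
  constructor
  · -- A part
    have hae : (fun y : ℝ => D x y * (P n).eval y ^ 2 * ρ y) =ᵐ[(volume : Measure ℝ)]
        (fun y : ℝ => (4 * x ^ 2 - 4) * ((P n).eval y * (P n).eval y * ρ y)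
          + ((4 * x * a (n + 1)) * ((P (n + 1)).eval y * (P n).eval y * ρ y)
          + ((4 * x * a n) * ((P (n - 1)).eval y * (P n).eval y * ρ y)
          + ((4 * a (n + 1) ^ 2) * ((P (n + 1)).eval y * (P (n + 1)).eval y * ρ y)
          + ((8 * a (n + 1) * a n) * ((P (n + 1)).eval y * (P (n - 1)).eval y * ρ y)
          + (4 * a n ^ 2) * ((P (n - 1)).eval y * (P (n - 1)).eval y * ρ y)))))) := by
      filter_upwards [hne x] with y hy
      rw [hDE x y hy]
      linear_combination (4 * ρ y * (x * (P n).eval y + y * (P n).eval y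
        + a (n + 1) * (P (n + 1)).eval y + a n * (P (n - 1)).eval y)) * (h1y y)
    rw [hA n x, integral_congr_ae hae,
      intlin6 _ _ _ _ _ _ _ _ _ _ _ _ (hInt n n) (hInt (n + 1) n) (hInt (n - 1) n)
        (hInt (n + 1) (n + 1)) (hInt (n + 1) (n - 1)) (hInt (n - 1) (n - 1)),
      hd n, ho (n + 1) n (by omega), ho (n - 1) n (by omega), hd (n + 1),
      ho (n + 1) (n - 1) (by omega), hd (n - 1)]
    ring
  · -- B part
    rcases eq_or_lt_of_le hn with h1' | h2'
    · -- n = 1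
      subst h1'
      have h2y : ∀ y : ℝ, y * (P 2).eval y
          = a 3 * (P 3).eval y + a 2 * (P 1).eval y := hrec 2 (by norm_num)
      have hae : (fun y : ℝ => D x y * (P 1).eval y * (P 0).eval y * ρ y)
          =ᵐ[(volume : Measure ℝ)]
          (fun y : ℝ => (4 * x ^ 2 - 4 + 4 * a 2 ^ 2) * ((P 1).eval y * (P 0).eval y * ρ y)
            + ((4 * x * a 2) * ((P 2).eval y * (P 0).eval y * ρ y)
            + ((4 * x * a 1) * ((P 0).eval y * (P 0).eval y * ρ y)
            + ((4 * a 2 * a 3) * ((P 3).eval y * (P 0).eval y * ρ y)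
            + (4 * a 1 * (P 0).coeff 0 ^ 2) * (y * ρ y))))) := by
        filter_upwards [hne x] with y hy
        rw [hDE x y hy]
        linear_combination (4 * ρ y * (P 0).eval y * (x + y)) * (h1y y)
          + (4 * a 2 * ρ y * (P 0).eval y) * (h2y y)
          + (4 * a 1 * ρ y * y * ((P 0).eval y + (P 0).coeff 0)) * (hP0eval y)
      rw [hB 1 x, show (1 : ℕ) - 1 = 0 from rfl, integral_congr_ae hae,
        intlin5 _ _ _ _ _ _ _ _ _ _ (hInt 1 0) (hInt 2 0) (hInt 0 0) (hInt 3 0) hIntyρ,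
        ho 1 0 (by omega), ho 2 0 (by omega), hd 0, ho 3 0 (by omega), hyρ0]
      ring
    · -- n ≥ 2
      have h2y : ∀ y : ℝ, y * (P (n - 1)).eval y
          = a n * (P n).eval y + a (n - 1) * (P (n - 2)).eval y := by
        intro y
        have h := hrec (n - 1) (by omega) y
        rw [show n - 1 + 1 = n by omega, show n - 1 - 1 = n - 2 by omega] at h
        exact h
      have hae : (fun y : ℝ => D x y * (P n).eval y * (P (n - 1)).eval y * ρ y)
          =ᵐ[(volume : Measure ℝ)]
          (fun y : ℝ => (4 * x ^ 2 - 4) * ((P n).eval y * (P (n - 1)).eval y * ρ y)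
            + ((4 * x * a n) * ((P n).eval y * (P n).eval y * ρ y)
            + ((4 * x * a (n - 1)) * ((P n).eval y * (P (n - 2)).eval y * ρ y)
            + ((4 * a (n + 1) * a n) * ((P (n + 1)).eval y * (P n).eval y * ρ y)
            + ((4 * a (n + 1) * a (n - 1)) * ((P (n + 1)).eval y * (P (n - 2)).eval y * ρ y)
            + ((4 * a n * a n) * ((P (n - 1)).eval y * (P n).eval y * ρ y)
            + (4 * a n * a (n - 1)) * ((P (n - 1)).eval y * (P (n - 2)).eval y * ρ y))))))) := by
        filter_upwards [hne x] with y hy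
        rw [hDE x y hy]
        linear_combination (4 * ρ y * y * (P (n - 1)).eval y) * (h1y y)
          + (4 * ρ y * (x * (P n).eval y + a (n + 1) * (P (n + 1)).eval y
              + a n * (P (n - 1)).eval y)) * (h2y y)
      rw [hB n x, integral_congr_ae hae,
        intlin7 _ _ _ _ _ _ _ _ _ _ _ _ _ _ (hInt n (n - 1)) (hInt n n) (hInt n (n - 2))
          (hInt (n + 1) n) (hInt (n + 1) (n - 2)) (hInt (n - 1) n) (hInt (n - 1) (n - 2)),
        ho n (n - 1) (by omega), hd n, ho n (n - 2) (by omega), ho (n + 1) n (by omega),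
        ho (n + 1) (n - 2) (by omega), ho (n - 1) n (by omega), ho (n - 1) (n - 2) (by omega)]
      ring
end

section
/- Let φ be an even nonconstant polynomial of degree 2m with positive leading coefficient, ρ = e^{-φ}, and let N_0 be such that for all p ≥ N_0 the polynomial A_p is strictly positive on ℝ. Define for p ≥ N_0 the operator L̂_p acting on smooth compactly supported f by L̂_p(f) = −(f/A_p)' + (B_p + φ')·(f/A_p). Then for every n ≥ N_0, every k ≥ 1, and every smooth compactly supported f: ∫_ℝ f(x) P̃_n(x) ρ(x) dx = ∫_ℝ (L̂_{n+k} ∘ L̂_{n+k-1} ∘ … ∘ L̂_{n+1})(f)(x) · P̃_{n+k}(x) ρ(x) dx. -/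
open MeasureTheory Polynomial

/-- The operator L̂ (for a given A, B, φ'): L̂(f) = -(f/A)' + (B + φ')·(f/A). -/
noncomputable def lhat (Af Bf dphi : ℝ → ℝ) (f : ℝ → ℝ) : ℝ → ℝ := fun x =>
  -deriv (fun y => f y / Af y) x + (Bf x + dphi x) * (f x / Af x)

/-- `lhatIter A B dphi n k f = (L̂_{n+k} ∘ L̂_{n+k-1} ∘ ... ∘ L̂_{n+1}) f`. -/
noncomputable def lhatIter (A B : ℕ → ℝ → ℝ) (dphi : ℝ → ℝ) (n : ℕ) :
    ℕ → (ℝ → ℝ) → ℝ → ℝ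
  | 0 => fun f => f
  | k + 1 => fun f => lhat (A (n + k + 1)) (B (n + k + 1)) dphi (lhatIter A B dphi n k f)

section Aux

open Filter Topology

lemma contDiff_polyeval (p : Polynomial ℝ) : ContDiff ℝ (⊤ : ℕ∞) fun x : ℝ => p.eval x := by
  induction p using Polynomial.induction_on' with
  | monomial n c =>
      simp only [Polynomial.eval_monomial]
      exact contDiff_const.mul (contDiff_id.pow n)
  | add p q hp hq => simpa using hp.add hq

lemma tendsto_polyeval_mul_exp_neg_atTop (φ : Polynomial ℝ)
    (h1 : Tendsto (fun y => φ.eval y - y) atTop atTop) (r : Polynomial ℝ) :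
    Tendsto (fun y => r.eval y * Real.exp (-φ.eval y)) atTop (𝓝 0) := by
  have h0 : Tendsto (fun y => |r.eval y| * Real.exp (-y)) atTop (𝓝 0) := by
    have := (r.tendsto_div_exp_atTop).abs
    simpa [abs_mul, Real.exp_neg, div_eq_mul_inv, abs_inv, Real.abs_exp] using this
  apply squeeze_zero_norm' _ h0
  filter_upwards [h1.eventually_ge_atTop 0] with y hy
  have h2 : Real.exp (-φ.eval y) ≤ Real.exp (-y) := Real.exp_le_exp.mpr (by linarith)
  calc ‖r.eval y * Real.exp (-φ.eval y)‖ = |r.eval y| * Real.exp (-φ.eval y) := by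
        rw [Real.norm_eq_abs, abs_mul, Real.abs_exp]
    _ ≤ |r.eval y| * Real.exp (-y) := by gcongr

lemma integrable_polyeval_mul_rho (m : ℕ) (hm : 1 ≤ m) (φ : Polynomial ℝ)
    (hφdeg : φ.natDegree = 2 * m) (hφlead : 0 < φ.leadingCoeff)
    (hφeven : ∀ x : ℝ, φ.eval (-x) = φ.eval x) (q : Polynomial ℝ) :
    Integrable (fun y => q.eval y * Real.exp (-φ.eval y)) := by
  have hφ0 : φ ≠ 0 := fun h => by simp [h, Polynomial.natDegree_zero] at hφdeg; omega
  -- φ - X tends to atTop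
  have hXdeg : (Polynomial.X : Polynomial ℝ).natDegree < φ.natDegree := by
    simp [Polynomial.natDegree_X, hφdeg]; omega
  have hσdeg : (φ - Polynomial.X).natDegree = φ.natDegree :=
    Polynomial.natDegree_sub_eq_left_of_natDegree_lt hXdeg
  have hσ0 : (φ - Polynomial.X) ≠ 0 := fun h => by
    rw [h, Polynomial.natDegree_zero] at hσdeg; omega
  have hσlead : 0 < (φ - Polynomial.X).leadingCoeff := by
    have : (φ - Polynomial.X).leadingCoeff = φ.leadingCoeff := by
      rw [Polynomial.leadingCoeff, hσdeg, Polynomial.coeff_sub,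
        Polynomial.coeff_X, Polynomial.leadingCoeff]
      rw [if_neg (show ¬(1:ℕ) = φ.natDegree by omega), sub_zero]
    rw [this]; exact hφlead
  have h1 : Tendsto (fun y => φ.eval y - y) atTop atTop := by
    have := Polynomial.tendsto_atTop_of_leadingCoeff_nonneg (φ - Polynomial.X)
      (by rw [Polynomial.degree_eq_natDegree hσ0]; exact_mod_cast by omega) hσlead.le
    simpa using this
  set r : Polynomial ℝ := (1 + Polynomial.X ^ 2) * q with hr
  set F : ℝ → ℝ := fun y => r.eval y * Real.exp (-φ.eval y) with hF
  have hFT : Tendsto F atTop (𝓝 0) := tendsto_polyeval_mul_exp_neg_atTop φ h1 r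
  have hFB : Tendsto F atBot (𝓝 0) := by
    have hcomp := tendsto_polyeval_mul_exp_neg_atTop φ h1 (r.comp (-Polynomial.X))
    have h2 := hcomp.comp tendsto_neg_atBot_atTop
    apply h2.congr
    intro y
    simp [Function.comp, Polynomial.eval_comp, hφeven y, hF]
  have hFcoc : Tendsto F (Filter.cocompact ℝ) (𝓝 0) := by
    rw [cocompact_eq_atBot_atTop]
    exact Filter.Tendsto.sup hFB hFT
  have hFcont : Continuous F := (r.continuous).mul (Real.continuous_exp.comp (φ.continuous.neg))
  -- boundedness of F
  obtain ⟨K, hK, hKb⟩ : ∃ K : Set ℝ, IsCompact K ∧ ∀ y ∉ K, dist (F y) 0 < 1 := by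
    have := Filter.hasBasis_cocompact.eventually_iff.mp
      (Metric.tendsto_nhds.mp hFcoc 1 one_pos)
    obtain ⟨K, hK1, hK2⟩ := this
    exact ⟨K, hK1, fun y hy => hK2 hy⟩
  obtain ⟨C, hC⟩ := hK.exists_bound_of_continuousOn hFcont.continuousOn
  set C' : ℝ := max C 1 with hC'
  have hFb : ∀ y, ‖F y‖ ≤ C' := by
    intro y
    by_cases hy : y ∈ K
    · exact le_trans (hC y hy) (le_max_left _ _)
    · have := hKb y hy
      rw [dist_zero_right] at this
      exact le_trans this.le (le_max_right _ _)
  -- conclude integrability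
  have hmeas : AEStronglyMeasurable (fun y => q.eval y * Real.exp (-φ.eval y)) volume :=
    ((q.continuous).mul (Real.continuous_exp.comp (φ.continuous.neg))).aestronglyMeasurable
  apply Integrable.mono' ((integrable_inv_one_add_sq).const_mul C') hmeas
  filter_upwards with y
  have hpos : (0:ℝ) < 1 + y ^ 2 := by positivity
  have hFy : ‖F y‖ = (1 + y ^ 2) * ‖q.eval y * Real.exp (-φ.eval y)‖ := by
    rw [hF]
    simp only [hr, Polynomial.eval_mul, Polynomial.eval_add, Polynomial.eval_one,
      Polynomial.eval_pow, Polynomial.eval_X]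
    rw [mul_assoc, norm_mul, Real.norm_eq_abs (1 + y ^ 2), abs_of_pos hpos]
  have hb := hFb y
  rw [hFy] at hb
  rw [← div_eq_mul_inv, le_div_iff₀ hpos]
  linarith [hb]

lemma exists_poly_integral (ψ : Polynomial ℝ) (D : ℝ → ℝ → ℝ)
    (hD : ∀ x y : ℝ, D x y * (x - y) = ψ.eval x - ψ.eval y)
    (w : ℝ → ℝ) (hw : ∀ q : Polynomial ℝ, Integrable (fun y => q.eval y * w y)) :
    ∃ Q : Polynomial ℝ, ∀ x, (∫ y : ℝ, D x y * w y) = Q.eval x := by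
  set N := ψ.natDegree + 1 with hN
  have hsum : ∀ x y : ℝ, x ≠ y →
      D x y = ∑ j ∈ Finset.range N, ∑ i ∈ Finset.range j,
        ψ.coeff j * (x ^ i * y ^ (j - 1 - i)) := by
    intro x y hxy
    have hne : x - y ≠ 0 := sub_ne_zero.mpr hxy
    apply mul_right_cancel₀ hne
    rw [hD, Finset.sum_mul]
    have hterm : ∀ j : ℕ, (∑ i ∈ Finset.range j,
        ψ.coeff j * (x ^ i * y ^ (j - 1 - i))) * (x - y)
        = ψ.coeff j * x ^ j - ψ.coeff j * y ^ j := by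
      intro j
      rw [← Finset.mul_sum, mul_assoc, geom_sum₂_mul, mul_sub]
    simp_rw [hterm]
    rw [Finset.sum_sub_distrib, ← Polynomial.eval_eq_sum_range, ← Polynomial.eval_eq_sum_range]
  refine ⟨∑ j ∈ Finset.range N, ∑ i ∈ Finset.range j,
      Polynomial.C (ψ.coeff j * ∫ y : ℝ, y ^ (j - 1 - i) * w y) * Polynomial.X ^ i, fun x => ?_⟩
  have hae : (fun y => D x y * w y) =ᵐ[volume]
      (fun y => ∑ j ∈ Finset.range N, ∑ i ∈ Finset.range j,
        (ψ.coeff j * x ^ i) * (y ^ (j - 1 - i) * w y)) := by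
    have hx : ({x} : Set ℝ)ᶜ ∈ ae volume :=
      compl_mem_ae_iff.mpr (Real.volume_singleton)
    filter_upwards [hx] with y hy
    have hxy : x ≠ y := fun h => hy (by simp [h])
    rw [hsum x y hxy, Finset.sum_mul]
    refine Finset.sum_congr rfl fun j _ => ?_
    rw [Finset.sum_mul]
    refine Finset.sum_congr rfl fun i _ => ?_
    ring
  have hint : ∀ j i : ℕ, Integrable (fun y : ℝ => (ψ.coeff j * x ^ i) * (y ^ (j - 1 - i) * w y)) := by
    intro j i
    have := (hw (Polynomial.X ^ (j - 1 - i))).const_mul (ψ.coeff j * x ^ i)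
    simpa using this
  rw [integral_congr_ae hae,
    integral_finset_sum _ (fun j _ => integrable_finset_sum _ (fun i _ => hint j i))]
  have hin : ∀ j ∈ Finset.range N, (∫ y : ℝ, ∑ i ∈ Finset.range j,
      (ψ.coeff j * x ^ i) * (y ^ (j - 1 - i) * w y))
      = ∑ i ∈ Finset.range j, (ψ.coeff j * x ^ i) * ∫ y : ℝ, y ^ (j - 1 - i) * w y := by
    intro j _
    rw [integral_finset_sum _ (fun i _ => hint j i)]
    exact Finset.sum_congr rfl fun i _ => MeasureTheory.integral_const_mul _ _
  rw [Finset.sum_congr rfl hin]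
  simp only [Polynomial.eval_finset_sum, Polynomial.eval_mul, Polynomial.eval_C,
    Polynomial.eval_pow, Polynomial.eval_X]
  exact Finset.sum_congr rfl fun j _ => Finset.sum_congr rfl fun i _ => by ring

end Aux

theorem stmt13 (m : ℕ) (hm : 1 ≤ m) (φ : Polynomial ℝ)
    (hφdeg : φ.natDegree = 2 * m) (hφlead : 0 < φ.leadingCoeff)
    (hφeven : ∀ x : ℝ, φ.eval (-x) = φ.eval x)
    (ρ : ℝ → ℝ) (hρ : ∀ x : ℝ, ρ x = Real.exp (-φ.eval x))
    (P : ℕ → Polynomial ℝ)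
    (hPdeg : ∀ n, (P n).natDegree = n)
    (hPlead : ∀ n, 0 < (P n).leadingCoeff)
    (hPorth : ∀ i j, (∫ x : ℝ, (P i).eval x * (P j).eval x * ρ x)
        = if i = j then (1 : ℝ) else 0)
    (a : ℕ → ℝ) (ha0 : a 0 = Real.sqrt (∫ x : ℝ, ρ x))
    (haS : ∀ n, 1 ≤ n → a n = ∫ x : ℝ, x * (P (n - 1)).eval x * (P n).eval x * ρ x)
    (D : ℝ → ℝ → ℝ)
    (hD : ∀ x y : ℝ, D x y * (x - y)
        = (Polynomial.derivative φ).eval x - (Polynomial.derivative φ).eval y)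
    (A B : ℕ → ℝ → ℝ)
    (hA : ∀ n, ∀ x : ℝ, A n x = a n * ∫ y : ℝ, D x y * (P n).eval y ^ 2 * ρ y)
    (hB : ∀ n, ∀ x : ℝ,
      B n x = a n * ∫ y : ℝ, D x y * (P n).eval y * (P (n - 1)).eval y * ρ y)
    (hODE : ∀ n, 1 ≤ n → ∀ x : ℝ,
      (Polynomial.derivative (P n)).eval x + B n x * (P n).eval x
        = A n x * (P (n - 1)).eval x)
    (N₀ : ℕ) (hApos : ∀ p, N₀ ≤ p → ∀ x : ℝ, 0 < A p x) :
    ∀ n, N₀ ≤ n → ∀ k : ℕ, 1 ≤ k → ∀ f : ℝ → ℝ,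
      ContDiff ℝ (⊤ : ℕ∞) f → HasCompactSupport f →
      (∫ x : ℝ, f x * (P n).eval x * ρ x)
        = ∫ x : ℝ, lhatIter A B (fun t => (Polynomial.derivative φ).eval t) n k f x *
            (P (n + k)).eval x * ρ x := by
  have hρ' : ρ = fun x => Real.exp (-φ.eval x) := funext hρ
  subst hρ'
  set ψ : Polynomial ℝ := Polynomial.derivative φ with hψ
  set rho : ℝ → ℝ := fun x => Real.exp (-φ.eval x) with hrho
  have hInt : ∀ q : Polynomial ℝ, Integrable (fun y => q.eval y * rho y) :=
    integrable_polyeval_mul_rho m hm φ hφdeg hφlead hφeven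
  have hwP : ∀ r q : Polynomial ℝ, Integrable (fun y => q.eval y * (r.eval y * rho y)) := by
    intro r q
    have := hInt (q * r)
    simpa [Polynomial.eval_mul, mul_assoc] using this
  -- A and B are polynomial functions
  have hArep : ∀ p : ℕ, ∃ Q : Polynomial ℝ, ∀ x, A p x = Q.eval x := by
    intro p
    obtain ⟨Q, hQ⟩ := exists_poly_integral ψ D hD
      (fun y => ((P p) ^ 2).eval y * rho y) (hwP _)
    refine ⟨Polynomial.C (a p) * Q, fun x => ?_⟩
    have h1 : (∫ y : ℝ, D x y * (P p).eval y ^ 2 * rho y) = Q.eval x := by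
      rw [← hQ x]
      congr 1
      funext y
      simp only [Polynomial.eval_pow]
      ring
    rw [hA p x, h1, Polynomial.eval_mul, Polynomial.eval_C]
  have hBrep : ∀ p : ℕ, ∃ Q : Polynomial ℝ, ∀ x, B p x = Q.eval x := by
    intro p
    obtain ⟨Q, hQ⟩ := exists_poly_integral ψ D hD
      (fun y => ((P p) * (P (p - 1))).eval y * rho y) (hwP _)
    refine ⟨Polynomial.C (a p) * Q, fun x => ?_⟩
    have h1 : (∫ y : ℝ, D x y * (P p).eval y * (P (p - 1)).eval y * rho y) = Q.eval x := by
      rw [← hQ x]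
      congr 1
      funext y
      simp only [Polynomial.eval_mul]
      ring
    rw [hB p x, h1, Polynomial.eval_mul, Polynomial.eval_C]
  choose QA hQA using hArep
  choose QB hQB using hBrep
  have hAfun : ∀ p, A p = fun x => (QA p).eval x := fun p => funext (hQA p)
  have hBfun : ∀ p, B p = fun x => (QB p).eval x := fun p => funext (hQB p)
  have hAsmooth : ∀ p, ContDiff ℝ (⊤ : ℕ∞) (A p) := fun p => (hAfun p) ▸ contDiff_polyeval (QA p)
  have hBsmooth : ∀ p, ContDiff ℝ (⊤ : ℕ∞) (B p) := fun p => (hBfun p) ▸ contDiff_polyeval (QB p)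
  have hψsmooth : ContDiff ℝ (⊤ : ℕ∞) (fun t : ℝ => ψ.eval t) := contDiff_polyeval ψ
  have hρsmooth : ContDiff ℝ (⊤ : ℕ∞) rho := by
    exact (Real.contDiff_exp.comp (contDiff_polyeval φ).neg)
  have hρderiv : ∀ x, HasDerivAt rho (rho x * (-ψ.eval x)) x := by
    intro x
    have := ((φ.hasDerivAt x).neg).exp
    simpa [hψ] using this
  -- the one-step identity
  have step : ∀ p : ℕ, N₀ ≤ p → 1 ≤ p → ∀ f : ℝ → ℝ, ContDiff ℝ (⊤ : ℕ∞) f → HasCompactSupport f →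
      (∫ x : ℝ, f x * (P (p - 1)).eval x * rho x)
        = ∫ x : ℝ, lhat (A p) (B p) (fun t => ψ.eval t) f x * (P p).eval x * rho x := by
    intro p hp hp1 f hf hsf
    have hAne : ∀ x, A p x ≠ 0 := fun x => (hApos p hp x).ne'
    set g : ℝ → ℝ := fun x => f x / A p x with hgdef
    have hg : ContDiff ℝ (⊤ : ℕ∞) g := hf.div (hAsmooth p) hAne
    have hgsupp : HasCompactSupport g := by
      have h1 : HasCompactSupport (f * fun x => (A p x)⁻¹) := hsf.mul_right
      have h2 : g = f * fun x => (A p x)⁻¹ := by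
        funext x; simp [hgdef, div_eq_mul_inv]
      rw [h2]; exact h1
    have hgderiv : ∀ x, HasDerivAt g (deriv g x) x :=
      fun x => ((hg.differentiable (by simp)) x).hasDerivAt
    set h : ℝ → ℝ := fun x => (P p).eval x * rho x with hhdef
    set h' : ℝ → ℝ := fun x => (Polynomial.derivative (P p)).eval x * rho x
      + (P p).eval x * (rho x * (-ψ.eval x)) with hh'def
    have hhderiv : ∀ x, HasDerivAt h (h' x) x :=
      fun x => ((P p).hasDerivAt x).mul (hρderiv x)
    have hcont_h : Continuous h := ((P p).continuous).mul hρsmooth.continuous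
    have hcont_h' : Continuous h' := by
      exact (((Polynomial.derivative (P p)).continuous).mul hρsmooth.continuous).add
        (((P p).continuous).mul (hρsmooth.continuous.mul hψsmooth.continuous.neg))
    have hgcont : Continuous g := hg.continuous
    have hgd_cont : Continuous (deriv g) := by
      have := (contDiff_succ_iff_deriv.mp (hg.of_le (by simp) :
        ContDiff ℝ (((⊤ : ℕ∞) : WithTop ℕ∞) + 1) g)).2.2
      exact this.continuous
    have int1 : Integrable (g * h') :=
      (hgcont.mul hcont_h').integrable_of_hasCompactSupport hgsupp.mul_right
    have int2 : Integrable (deriv g * h) :=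
      (hgd_cont.mul hcont_h).integrable_of_hasCompactSupport hgsupp.deriv.mul_right
    have int3 : Integrable (g * h) :=
      (hgcont.mul hcont_h).integrable_of_hasCompactSupport hgsupp.mul_right
    have ibp : ∫ x : ℝ, g x * h' x = - ∫ x : ℝ, deriv g x * h x :=
      integral_mul_deriv_eq_deriv_mul_of_integrable (fun x _ => hgderiv x) (fun x _ => hhderiv x) int1 int2 int3
    have intN : Integrable (fun x => (-(deriv g x)) * h x) := by
      have he : (fun x => (-(deriv g x)) * h x) = fun x => -((deriv g * h) x) := by
        funext x; simp [neg_mul]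
      rw [he]; exact int2.neg
    have intBg : Integrable (fun x => ((B p x + ψ.eval x) * g x) * h x) := by
      apply Continuous.integrable_of_hasCompactSupport
      · exact (((hBsmooth p).continuous.add hψsmooth.continuous).mul hgcont).mul hcont_h
      · exact (hgsupp.mul_left).mul_right
    have split : (∫ x : ℝ, lhat (A p) (B p) (fun t => ψ.eval t) f x * (P p).eval x * rho x)
        = (∫ x : ℝ, (-(deriv g x)) * h x) + ∫ x : ℝ, ((B p x + ψ.eval x) * g x) * h x := by
      rw [← integral_add intN intBg]
      apply integral_congr_ae
      filter_upwards with x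
      simp only [lhat, ← hgdef, hhdef]
      ring
    have e1 : (∫ x : ℝ, (-(deriv g x)) * h x) = ∫ x : ℝ, g x * h' x := by
      rw [ibp]
      simp [neg_mul, integral_neg]
    have key : ∀ x, g x * h' x + ((B p x + ψ.eval x) * g x) * h x
        = f x * (P (p - 1)).eval x * rho x := by
      intro x
      have h1 : g x * A p x = f x := div_mul_cancel₀ (f x) (hAne x)
      have h2 := hODE p hp1 x
      have h3 : g x * h' x + ((B p x + ψ.eval x) * g x) * h x
          = (g x * A p x) * ((P (p - 1)).eval x * rho x) := by
        simp only [hh'def, hhdef]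
        linear_combination (g x * rho x) * h2
      rw [h3, h1]
      ring
    have int1' : Integrable (fun x : ℝ => g x * h' x) := int1
    rw [split, e1, ← integral_add int1' intBg]
    apply integral_congr_ae
    filter_upwards with x
    exact (key x).symm
  -- closure under lhat
  have closure : ∀ p : ℕ, N₀ ≤ p → ∀ f : ℝ → ℝ, ContDiff ℝ (⊤ : ℕ∞) f → HasCompactSupport f →
      ContDiff ℝ (⊤ : ℕ∞) (lhat (A p) (B p) (fun t => ψ.eval t) f)
        ∧ HasCompactSupport (lhat (A p) (B p) (fun t => ψ.eval t) f) := by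
    intro p hp f hf hsf
    have hAne : ∀ x, A p x ≠ 0 := fun x => (hApos p hp x).ne'
    have hg : ContDiff ℝ (⊤ : ℕ∞) (fun x => f x / A p x) := hf.div (hAsmooth p) hAne
    have hgsupp : HasCompactSupport (fun x => f x / A p x) := by
      have h1 : HasCompactSupport (f * fun x => (A p x)⁻¹) := hsf.mul_right
      have h2 : (fun x => f x / A p x) = f * fun x => (A p x)⁻¹ := by
        funext x; simp [div_eq_mul_inv]
      rw [h2]; exact h1
    constructor
    · have h1 : ContDiff ℝ (⊤ : ℕ∞) (deriv fun x => f x / A p x) :=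
        (contDiff_succ_iff_deriv.mp (hg.of_le (by simp) :
          ContDiff ℝ (((⊤ : ℕ∞) : WithTop ℕ∞) + 1) (fun x => f x / A p x))).2.2
      exact (h1.neg).add ((((hBsmooth p).add hψsmooth).mul hg))
    · have h2 : HasCompactSupport (deriv fun x => f x / A p x) := hgsupp.deriv
      have h3 : HasCompactSupport
          (fun x => (B p x + ψ.eval x) * (f x / A p x)) := by
        have := hgsupp.mul_left (f := fun x => B p x + ψ.eval x)
        exact this
      exact HasCompactSupport.add (HasCompactSupport.neg h2) h3
  -- induction
  intro n hn k hk f hf hsf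
  clear hk
  suffices H : ∀ k : ℕ, ∀ f : ℝ → ℝ, ContDiff ℝ (⊤ : ℕ∞) f → HasCompactSupport f →
      (ContDiff ℝ (⊤ : ℕ∞) (lhatIter A B (fun t => ψ.eval t) n k f)
        ∧ HasCompactSupport (lhatIter A B (fun t => ψ.eval t) n k f))
      ∧ ((∫ x : ℝ, f x * (P n).eval x * rho x)
        = ∫ x : ℝ, lhatIter A B (fun t => ψ.eval t) n k f x * (P (n + k)).eval x * rho x) by
    exact (H k f hf hsf).2
  intro k
  induction k with
  | zero =>
      intro f hf hsf
      exact ⟨⟨hf, hsf⟩, by simp [lhatIter]⟩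
  | succ k ih =>
      intro f hf hsf
      obtain ⟨⟨hCk, hSk⟩, hIk⟩ := ih f hf hsf
      have hp : N₀ ≤ n + k + 1 := le_trans hn (by omega)
      have hcl := closure (n + k + 1) hp _ hCk hSk
      have hiter : lhatIter A B (fun t => ψ.eval t) n (k + 1) f
          = lhat (A (n + k + 1)) (B (n + k + 1)) (fun t => ψ.eval t)
            (lhatIter A B (fun t => ψ.eval t) n k f) := rfl
      constructor
      · rw [hiter]; exact hcl
      · rw [hIk, hiter]
        have hstep := step (n + k + 1) hp (by omega) _ hCk hSk
        have hidx : n + k + 1 - 1 = n + k := by omega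
        rw [hidx] at hstep
        have hidx2 : n + (k + 1) = n + k + 1 := by omega
        rw [hidx2]
        exact hstep
end

section
/- Let φ(x) = Σ_{p=0}^{m} v_p x^{2p} be an even polynomial with m ≥ 1 and v_m > 0, and let μ_k = ∫_ℝ t^k e^{-φ(t)} dt denote the k-th moment of the measure e^{-φ(x)} dx. Then for all k ∈ ℕ: μ_{2k+1} = 0, and 2m v_m μ_{2(m+k)} = (2k+1) μ_{2k} − Σ_{p=1}^{m-1} 2p v_p μ_{2(p+k)}. -/
open MeasureTheory Filter Real

lemma aux_ev (m : ℕ) (hm : 1 ≤ m) (v : ℕ → ℝ) (hv : 0 < v m) :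
    ∀ᶠ x : ℝ in atTop, 2 * x ≤ ∑ p ∈ Finset.range (m + 1), v p * x ^ (2 * p) := by
  obtain ⟨n, rfl⟩ : ∃ n, m = n + 1 := ⟨m - 1, by omega⟩
  set C := ∑ p ∈ Finset.range (n + 1), |v p| with hCdef
  have hC : 0 ≤ C := Finset.sum_nonneg fun _ _ => abs_nonneg _
  filter_upwards [eventually_ge_atTop 1, eventually_ge_atTop ((2 + C) / v (n + 1))]
    with x hx1 hx2
  have hx0 : (0 : ℝ) ≤ x := by linarith
  rw [Finset.sum_range_succ]
  have htail : -(C * x ^ (2 * n)) ≤ ∑ p ∈ Finset.range (n + 1), v p * x ^ (2 * p) := by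
    have h1 : |∑ p ∈ Finset.range (n + 1), v p * x ^ (2 * p)| ≤ C * x ^ (2 * n) := by
      calc |∑ p ∈ Finset.range (n + 1), v p * x ^ (2 * p)|
          ≤ ∑ p ∈ Finset.range (n + 1), |v p * x ^ (2 * p)| :=
            Finset.abs_sum_le_sum_abs _ _
        _ ≤ ∑ p ∈ Finset.range (n + 1), |v p| * x ^ (2 * n) := by
            refine Finset.sum_le_sum fun p hp => ?_
            rw [abs_mul, abs_pow, abs_of_nonneg hx0]
            refine mul_le_mul_of_nonneg_left ?_ (abs_nonneg _)
            exact pow_le_pow_right₀ hx1 (by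
              have := Finset.mem_range.mp hp; omega)
        _ = C * x ^ (2 * n) := by rw [← Finset.sum_mul]
    linarith [neg_abs_le (∑ p ∈ Finset.range (n + 1), v p * x ^ (2 * p))]
  have hkey : 2 * x + C ≤ v (n + 1) * x ^ 2 := by
    have h2 : 2 + C ≤ v (n + 1) * x := by
      rwa [div_le_iff₀ hv, mul_comm] at hx2
    nlinarith
  have hpow : (1 : ℝ) ≤ x ^ (2 * n) := one_le_pow₀ hx1
  have hsplit : x ^ (2 * (n + 1)) = x ^ 2 * x ^ (2 * n) := by
    rw [← pow_add]; ring_nf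
  rw [hsplit]
  nlinarith [mul_le_mul_of_nonneg_right hkey (le_trans zero_le_one hpow)]

lemma aux_int (m : ℕ) (hm : 1 ≤ m) (v : ℕ → ℝ) (hv : 0 < v m) (n : ℕ) :
    Integrable (fun t : ℝ =>
      t ^ n * Real.exp (-(∑ p ∈ Finset.range (m + 1), v p * t ^ (2 * p)))) := by
  set φ : ℝ → ℝ := fun t => ∑ p ∈ Finset.range (m + 1), v p * t ^ (2 * p) with hφdef
  have hφc : Continuous φ :=
    continuous_finset_sum _ fun p _ => continuous_const.mul (continuous_pow _)
  have hφeven : ∀ x : ℝ, φ (-x) = φ x := by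
    intro x
    simp only [hφdef]
    exact Finset.sum_congr rfl fun p _ => by rw [Even.neg_pow (even_two_mul p)]
  set f : ℝ → ℝ := fun t => t ^ n * Real.exp (-φ t) with hfdef
  have hfc : Continuous f := (continuous_pow n).mul (Real.continuous_exp.comp hφc.neg)
  have ho : f =O[atTop] fun x : ℝ => Real.exp (-1 * x) := by
    rw [Asymptotics.isBigO_iff]
    refine ⟨1, ?_⟩
    filter_upwards [aux_ev m hm v hv, eventually_ge_atTop (0 : ℝ),
      (tendsto_pow_mul_exp_neg_atTop_nhds_zero n).eventually_le_const one_pos]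
      with x hev hx0 hsm
    have h1 : Real.exp (-φ x) ≤ Real.exp (-(2 * x)) := Real.exp_le_exp.mpr (by linarith)
    have h2 : x ^ n * Real.exp (-φ x) ≤ x ^ n * Real.exp (-(2 * x)) :=
      mul_le_mul_of_nonneg_left h1 (pow_nonneg hx0 n)
    have h3 : x ^ n * Real.exp (-(2 * x)) = (x ^ n * Real.exp (-x)) * Real.exp (-x) := by
      rw [mul_assoc, ← Real.exp_add]; ring_nf
    have h4 : (x ^ n * Real.exp (-x)) * Real.exp (-x) ≤ 1 * Real.exp (-x) :=
      mul_le_mul_of_nonneg_right hsm (Real.exp_pos _).le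
    have hnorm : ‖f x‖ = x ^ n * Real.exp (-φ x) := by
      rw [Real.norm_eq_abs, abs_mul, abs_pow, abs_of_nonneg hx0,
        abs_of_pos (Real.exp_pos _)]
    rw [hnorm, Real.norm_eq_abs, abs_of_pos (Real.exp_pos _)]
    calc x ^ n * Real.exp (-φ x) ≤ 1 * Real.exp (-x) := by linarith
      _ = 1 * Real.exp (-1 * x) := by ring_nf
  have hsymm : (norm ∘ f) =ᵐ[volume] (norm ∘ f ∘ Neg.neg) := by
    refine Filter.EventuallyEq.of_eq (funext fun x => ?_)
    simp only [Function.comp_apply, hfdef, hφeven, Real.norm_eq_abs, abs_mul, abs_pow,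
      abs_neg]
  exact (hfc.locallyIntegrable).integrable_of_isBigO_atTop_of_norm_isNegInvariant hsymm ho
    ⟨Set.Ioi 0, Ioi_mem_atTop 0, exp_neg_integrableOn_Ioi 0 one_pos⟩

theorem stmt17 (m : ℕ) (hm : 1 ≤ m) (v : ℕ → ℝ) (hv : 0 < v m)
    (φ : ℝ → ℝ)
    (hφ : ∀ x : ℝ, φ x = ∑ p ∈ Finset.range (m + 1), v p * x ^ (2 * p))
    (μ : ℕ → ℝ) (hμ : ∀ k : ℕ, μ k = ∫ t : ℝ, t ^ k * Real.exp (-φ t)) :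
    ∀ k : ℕ, μ (2 * k + 1) = 0 ∧
      2 * (m : ℝ) * v m * μ (2 * (m + k))
        = (2 * (k : ℝ) + 1) * μ (2 * k)
          - ∑ p ∈ Finset.Ico 1 m, 2 * (p : ℝ) * v p * μ (2 * (p + k)) := by
  have hφ' : φ = fun x => ∑ p ∈ Finset.range (m + 1), v p * x ^ (2 * p) := funext hφ
  subst hφ'
  set Φ : ℝ → ℝ := fun x => ∑ p ∈ Finset.range (m + 1), v p * x ^ (2 * p) with hΦdef
  have hΦeven : ∀ x : ℝ, Φ (-x) = Φ x := fun x =>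
    Finset.sum_congr rfl fun p _ => by rw [Even.neg_pow (even_two_mul p)]
  have hint : ∀ n : ℕ, Integrable (fun t : ℝ => t ^ n * Real.exp (-Φ t)) :=
    aux_int m hm v hv
  intro k
  constructor
  · -- odd moment vanishes
    rw [hμ]
    have hE := integral_neg_eq_self
      (fun t : ℝ => t ^ (2 * k + 1) * Real.exp (-Φ t)) volume
    have heq : ∀ x : ℝ, (-x) ^ (2 * k + 1) * Real.exp (-Φ (-x))
        = -(x ^ (2 * k + 1) * Real.exp (-Φ x)) := by
      intro x
      rw [hΦeven, Odd.neg_pow ⟨k, by ring⟩]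
      ring
    rw [show (fun x : ℝ => (-x) ^ (2 * k + 1) * Real.exp (-Φ (-x)))
        = fun x : ℝ => -(x ^ (2 * k + 1) * Real.exp (-Φ x)) from funext heq] at hE
    rw [integral_neg] at hE
    linarith
  · -- integration by parts identity
    have hderiv : ∀ t : ℝ, HasDerivAt (fun t : ℝ => t ^ (2 * k + 1) * Real.exp (-Φ t))
        ((2 * (k : ℝ) + 1) * (t ^ (2 * k) * Real.exp (-Φ t))
          - ∑ p ∈ Finset.range (m + 1),
              (2 * (p : ℝ) * v p) * (t ^ (2 * (p + k)) * Real.exp (-Φ t))) t := by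
      intro t
      have hφd : HasDerivAt Φ
          (∑ p ∈ Finset.range (m + 1), v p * (↑(2 * p) * t ^ (2 * p - 1))) t := by
        apply HasDerivAt.fun_sum
        intro p _
        exact (hasDerivAt_pow (2 * p) t).const_mul (v p)
      have hexp := (hφd.neg).exp
      have hmul := (hasDerivAt_pow (2 * k + 1) t).mul hexp
      refine hmul.congr_deriv ?_
      symm
      have hterm : ∀ p ∈ Finset.range (m + 1),
          (2 * (p : ℝ) * v p) * (t ^ (2 * (p + k)) * Real.exp (-Φ t))
            = t ^ (2 * k + 1) * (Real.exp (-Φ t) * (v p * (↑(2 * p) * t ^ (2 * p - 1)))) := by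
        intro p _
        cases p with
        | zero => simp
        | succ q =>
          have hp : t ^ (2 * (q + 1) - 1) * t ^ (2 * k + 1) = t ^ (2 * (q + 1 + k)) := by
            rw [← pow_add]; congr 1; omega
          rw [← hp]
          push_cast
          ring
      rw [Finset.sum_congr rfl hterm]
      simp only [mul_neg, ← Finset.mul_sum, Nat.add_sub_cancel, Pi.neg_apply]
      push_cast
      ring
    have hintsum : Integrable (fun t : ℝ => ∑ p ∈ Finset.range (m + 1),
        (2 * (p : ℝ) * v p) * (t ^ (2 * (p + k)) * Real.exp (-Φ t))) :=
      integrable_finset_sum _ fun p _ => (hint (2 * (p + k))).const_mul _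
    have hF'int : Integrable (fun t : ℝ =>
        (2 * (k : ℝ) + 1) * (t ^ (2 * k) * Real.exp (-Φ t))
          - ∑ p ∈ Finset.range (m + 1),
              (2 * (p : ℝ) * v p) * (t ^ (2 * (p + k)) * Real.exp (-Φ t))) :=
      ((hint (2 * k)).const_mul _).sub hintsum
    have hFint : Integrable (fun t : ℝ => t ^ (2 * k + 1) * Real.exp (-Φ t)) :=
      hint (2 * k + 1)
    have hzero : (∫ t : ℝ, ((2 * (k : ℝ) + 1) * (t ^ (2 * k) * Real.exp (-Φ t))
        - ∑ p ∈ Finset.range (m + 1),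
            (2 * (p : ℝ) * v p) * (t ^ (2 * (p + k)) * Real.exp (-Φ t)))) = 0 :=
      integral_eq_zero_of_hasDerivAt_of_integrable hderiv hF'int hFint
    rw [integral_sub ((hint (2 * k)).const_mul _) hintsum, integral_const_mul,
      integral_finset_sum _ (fun p _ => (hint (2 * (p + k))).const_mul _)] at hzero
    simp only [integral_const_mul] at hzero
    -- split the sum
    have hsplit : ∑ p ∈ Finset.range (m + 1),
        (2 * (p : ℝ) * v p) * ∫ t : ℝ, t ^ (2 * (p + k)) * Real.exp (-Φ t)
        = (∑ p ∈ Finset.Ico 1 m,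
            (2 * (p : ℝ) * v p) * ∫ t : ℝ, t ^ (2 * (p + k)) * Real.exp (-Φ t))
          + (2 * (m : ℝ) * v m) * ∫ t : ℝ, t ^ (2 * (m + k)) * Real.exp (-Φ t) := by
      rw [Finset.sum_range_succ]
      congr 1
      rw [Finset.range_eq_Ico, Finset.sum_eq_sum_Ico_succ_bot hm]
      simp
    rw [hsplit] at hzero
    simp only [hμ]
    linarith
end
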